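/- Let z, ξ, ξ' ∈ 𝔻 with ρ(z, ξ')² ≥ 1/2. Then | 1 − ρ(z,ξ)²/ρ(z,ξ')² | ≤ 2·(1−|z|²)·( | (1−|ξ|²)/|1−conj(ξ)z|² − (1−|ξ|²)/|1−conj(ξ')z|² | + | |ξ'|² − |ξ|² | / |1−conj(ξ')z|² ). -/

import Mathlib

open Complex Metric Set

/-- The open unit disk in the complex plane. -/
def unitDisk : Set ℂ := Metric.ball 0 1

/-- The pseudohyperbolic distance `ρ(z,w) = |(z-w)/(1 - conj(w) z)|`. -/
noncomputable def pseudoDist (z w : ℂ) : ℝ :=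
  ‖(z - w) / (1 - (starRingEnd ℂ) w * z)‖

/-! Since `1 - ρ(z,w)² = (1-|z|²)(1-|w|²)/|1-conj(w) z|²`, the difference `ρ(z,ξ')² - ρ(z,ξ)²`
is `(1-|z|²)` times the difference of the two Poisson-type quotients `(1-|ξ|²)/|1-conj(ξ) z|²`
and `(1-|ξ'|²)/|1-conj(ξ') z|²`. Dividing by `ρ(z,ξ')² ≥ 1/2` costs at most a factor `2`, and
the quotient difference splits, by changing first the denominator and then the numerator,
into the two terms of the bound. -/

lemma norm_lt_one_of_mem_unitDisk {z : ℂ} (hz : z ∈ unitDisk) : ‖z‖ < 1 :=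
  mem_ball_zero_iff.mp hz

lemma one_sub_conj_mul_ne_zero {z w : ℂ} (hz : ‖z‖ < 1) (hw : ‖w‖ ≤ 1) :
    1 - (starRingEnd ℂ) w * z ≠ 0 := by
  have hlt : ‖(starRingEnd ℂ) w * z‖ < 1 := by
    rw [norm_mul, Complex.norm_conj]
    calc ‖w‖ * ‖z‖ ≤ 1 * ‖z‖ := by gcongr
      _ < 1 := by rwa [one_mul]
  intro h
  rw [← sub_eq_zero.mp h, norm_one] at hlt
  exact lt_irrefl 1 hlt

lemma sq_norm_one_sub_conj_mul_sub_sq_norm_sub (z w : ℂ) :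
    ‖1 - (starRingEnd ℂ) w * z‖ ^ 2 - ‖z - w‖ ^ 2 = (1 - ‖z‖ ^ 2) * (1 - ‖w‖ ^ 2) := by
  simp only [Complex.sq_norm, Complex.normSq_apply, Complex.mul_re, Complex.mul_im,
    Complex.sub_re, Complex.sub_im, Complex.one_re, Complex.one_im, Complex.conj_re,
    Complex.conj_im]
  ring

lemma one_sub_pseudoDist_sq {z w : ℂ} (h : 1 - (starRingEnd ℂ) w * z ≠ 0) :
    1 - pseudoDist z w ^ 2 = (1 - ‖z‖ ^ 2) * (1 - ‖w‖ ^ 2) / ‖1 - (starRingEnd ℂ) w * z‖ ^ 2 := by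
  have hD : ‖1 - (starRingEnd ℂ) w * z‖ ^ 2 ≠ 0 := by positivity
  rw [pseudoDist, norm_div, div_pow, ← sq_norm_one_sub_conj_mul_sub_sq_norm_sub, sub_div,
    div_self hD]

lemma abs_one_sub_div_le {a b : ℝ} (hb : 1 / 2 ≤ b) : |1 - a / b| ≤ 2 * |b - a| := by
  have hb0 : 0 < b := by linarith
  rw [one_sub_div hb0.ne', abs_div, abs_of_pos hb0, div_le_iff₀ hb0]
  nlinarith [abs_nonneg (b - a)]

lemma abs_div_sub_div_le (p q D D' : ℝ) (hD' : 0 < D') :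
    |p / D - q / D'| ≤ |p / D - p / D'| + |p - q| / D' := by
  calc |p / D - q / D'| = |(p / D - p / D') + (p - q) / D'| := by
        congr 1; field_simp; ring
    _ ≤ |p / D - p / D'| + |(p - q) / D'| := abs_add_le _ _
    _ = |p / D - p / D'| + |p - q| / D' := by rw [abs_div, abs_of_pos hD']

/-- Let `z, ξ, ξ' ∈ 𝔻` with `ρ(z,ξ')² ≥ 1/2`. Then
`|1 − ρ(z,ξ)²/ρ(z,ξ')²| ≤ 2(1−|z|²)( |(1−|ξ|²)/|1−conj(ξ)z|² − (1−|ξ|²)/|1−conj(ξ')z|²|`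
`+ ||ξ'|² − |ξ|²| / |1−conj(ξ')z|² )`. -/
theorem pseudoDist_ratio_bound (z ξ ξ' : ℂ)
    (hz : z ∈ unitDisk) (hξ : ξ ∈ unitDisk) (hξ' : ξ' ∈ unitDisk)
    (h : (1 : ℝ) / 2 ≤ pseudoDist z ξ' ^ 2) :
    |1 - pseudoDist z ξ ^ 2 / pseudoDist z ξ' ^ 2| ≤
      2 * (1 - ‖z‖ ^ 2) *
        (|(1 - ‖ξ‖ ^ 2) / ‖1 - (starRingEnd ℂ) ξ * z‖ ^ 2 -
           (1 - ‖ξ‖ ^ 2) / ‖1 - (starRingEnd ℂ) ξ' * z‖ ^ 2| +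
         |‖ξ'‖ ^ 2 - ‖ξ‖ ^ 2| /
           ‖1 - (starRingEnd ℂ) ξ' * z‖ ^ 2) := by
  have hz1 := norm_lt_one_of_mem_unitDisk hz
  have hD := one_sub_conj_mul_ne_zero hz1 (norm_lt_one_of_mem_unitDisk hξ).le
  have hD' := one_sub_conj_mul_ne_zero hz1 (norm_lt_one_of_mem_unitDisk hξ').le
  have hc : 0 ≤ 1 - ‖z‖ ^ 2 := by nlinarith [norm_nonneg z]
  have hdiff : pseudoDist z ξ' ^ 2 - pseudoDist z ξ ^ 2 =
      (1 - ‖z‖ ^ 2) * ((1 - ‖ξ‖ ^ 2) / ‖1 - (starRingEnd ℂ) ξ * z‖ ^ 2 -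
        (1 - ‖ξ'‖ ^ 2) / ‖1 - (starRingEnd ℂ) ξ' * z‖ ^ 2) := by
    linear_combination one_sub_pseudoDist_sq hD - one_sub_pseudoDist_sq hD'
  calc |1 - pseudoDist z ξ ^ 2 / pseudoDist z ξ' ^ 2|
      ≤ 2 * |pseudoDist z ξ' ^ 2 - pseudoDist z ξ ^ 2| := abs_one_sub_div_le h
    _ ≤ _ := by
      rw [hdiff, abs_mul, abs_of_nonneg hc, mul_assoc]
      gcongr
      rw [← sub_sub_sub_cancel_left (‖ξ‖ ^ 2) (‖ξ'‖ ^ 2) 1]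
      exact abs_div_sub_div_le _ _ _ _ (by positivity)
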